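/- arXiv:2202.03343 — 2 statements merged into one kernel-verified Lean document; each statement's English description precedes it below -/
import Mathlib

section
/- Let V(ξ) = Σ_{i=1}^{n−1} kᵢ φᵢ(ξ)². Let r > 0 and let α > 0 be such that V(p) > α for every p ∈ ℝⁿ with ‖p‖ = r. Set Ω_α = {ξ ∈ ℝⁿ : ‖ξ‖ < r and V(ξ) ≤ α}. Then Ω_α is positively invariant: every differentiable ξ : [0,∞) → ℝⁿ with ξ′(t) = χ(ξ(t)) for all t ≥ 0 and ξ(0) ∈ Ω_α satisfies ξ(t) ∈ Ω_α for all t ≥ 0. -/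
/-!
The vector `⊥_φ` is orthogonal to every `∇φᵢ` (a determinant with a repeated column vanishes), so
along a trajectory the Lyapunov function `V = Σ kᵢ φᵢ²` has derivative
`⟪∇V, χ⟫ = 2 ⟪s, ⊥_φ - s⟫ = -2 ‖s‖² ≤ 0`, where `s = Σ kᵢ φᵢ ∇φᵢ`. Hence `V` stays `≤ α`
along the trajectory, and the trajectory cannot reach the sphere `‖p‖ = r`, on which `V > α`,
without crossing it (intermediate value theorem).
-/

open scoped RealInnerProductSpace

open Set

theorem inner_eq_zero_of_forall_inner_eq_det {n : ℕ} {w : EuclideanSpace ℝ (Fin n)}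
    (v : Fin (n - 1) → EuclideanSpace ℝ (Fin n))
    (hw : ∀ u, ⟪w, u⟫ = Matrix.det (Matrix.of fun i j : Fin n =>
      if h : (j : ℕ) < n - 1 then v ⟨j, h⟩ i else u i))
    (i : Fin (n - 1)) : ⟪w, v i⟫ = 0 := by
  have hlast : n - 1 < n := by have := i.2; omega
  rw [hw]
  refine Matrix.det_zero_of_column_eq (i := ⟨i, i.2.trans hlast⟩) (j := ⟨n - 1, hlast⟩) ?_
    fun m => ?_
  · simpa [Fin.ext_iff] using i.2.ne
  · simp [i.2]

section Lyapunov

variable {E ι : Type*} [NormedAddCommGroup E] [InnerProductSpace ℝ E] [Fintype ι]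

theorem HasDerivAt.sum_mul_sq_comp [CompleteSpace E] {φ : ι → E → ℝ} {k : ι → ℝ} {γ : ℝ → E}
    {v : E} {t : ℝ}
    (hγ : HasDerivAt γ v t) (hφ : ∀ i, DifferentiableAt ℝ (φ i) (γ t)) :
    HasDerivAt (fun s => ∑ i, k i * φ i (γ s) ^ 2)
      (2 * ⟪∑ i, (k i * φ i (γ t)) • gradient (φ i) (γ t), v⟫) t := by
  rw [sum_inner, Finset.mul_sum]
  refine HasDerivAt.fun_sum fun i _ => ?_
  have hφγ : HasDerivAt (fun s => φ i (γ s)) ⟪gradient (φ i) (γ t), v⟫ t := by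
    have hcomp := (hφ i).hasGradientAt.hasFDerivAt.comp_hasDerivAt t hγ
    rw [InnerProductSpace.toDual_apply_apply] at hcomp
    exact hcomp
  exact ((hφγ.pow 2).const_mul (k i)).congr_deriv (by rw [real_inner_smul_left]; ring)

theorem inner_sub_self_eq_neg_of_orthogonal {w : E} {c : ι → ℝ} {g : ι → E}
    (hw : ∀ i, ⟪w, g i⟫ = 0) :
    ⟪∑ i, c i • g i, w - ∑ i, c i • g i⟫ = -‖∑ i, c i • g i‖ ^ 2 := by
  have hsw : ⟪∑ i, c i • g i, w⟫ = 0 := by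
    simp [real_inner_comm w, inner_sum, inner_smul_right, hw]
  rw [inner_sub_right, hsw, real_inner_self_eq_norm_sq, zero_sub]

end Lyapunov

theorem antitoneOn_Ici_of_hasDerivAt_nonpos {f f' : ℝ → ℝ} {a : ℝ}
    (hf : ∀ t, a ≤ t → HasDerivAt f (f' t) t) (hf' : ∀ t, a ≤ t → f' t ≤ 0) :
    AntitoneOn f (Ici a) := by
  refine antitoneOn_of_hasDerivWithinAt_nonpos (f' := f') (convex_Ici a)
    (fun t ht => (hf t ht).continuousAt.continuousWithinAt) (fun t ht => ?_) fun t ht => ?_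
  all_goals rw [interior_Ici] at ht
  · exact (hf t (le_of_lt ht)).hasDerivWithinAt
  · exact hf' t (le_of_lt ht)

theorem mem_ball_inter_sublevel_of_antitoneOn {E : Type*} [NormedAddCommGroup E]
    {V : E → ℝ} {r α : ℝ} (hV : ∀ p : E, ‖p‖ = r → α < V p) {ξ : ℝ → E}
    (hξ : ContinuousOn ξ (Ici 0)) (hanti : AntitoneOn (V ∘ ξ) (Ici 0))
    (h0 : ‖ξ 0‖ < r ∧ V (ξ 0) ≤ α) {t : ℝ} (ht : 0 ≤ t) :
    ‖ξ t‖ < r ∧ V (ξ t) ≤ α := by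
  have hVle : ∀ s, 0 ≤ s → V (ξ s) ≤ α := fun s hs =>
    (hanti self_mem_Ici hs hs).trans h0.2
  refine ⟨?_, hVle t ht⟩
  by_contra! hrt
  obtain ⟨s, hs, hsr⟩ := intermediate_value_Icc ht
    ((hξ.mono Icc_subset_Ici_self).norm) ⟨h0.1.le, hrt⟩
  exact (hV (ξ s) hsr).not_ge (hVle s hs.1)

theorem stmt5_general (n : ℕ)
    (k : Fin (n - 1) → ℝ)
    (φ : Fin (n - 1) → EuclideanSpace ℝ (Fin n) → ℝ)
    (hφ : ∀ i, ContDiff ℝ 1 (φ i))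
    (bot : EuclideanSpace ℝ (Fin n) → EuclideanSpace ℝ (Fin n))
    (hbot : ∀ ξ u : EuclideanSpace ℝ (Fin n),
      ⟪bot ξ, u⟫ = Matrix.det (Matrix.of (fun (i j : Fin n) =>
        if h : (j : ℕ) < n - 1 then gradient (φ ⟨j, h⟩) ξ i else u i)))
    (χ : EuclideanSpace ℝ (Fin n) → EuclideanSpace ℝ (Fin n))
    (hχ : ∀ ξ, χ ξ = bot ξ - ∑ i, (k i * φ i ξ) • gradient (φ i) ξ)
    (V : EuclideanSpace ℝ (Fin n) → ℝ)
    (hV : ∀ ξ, V ξ = ∑ i, k i * φ i ξ ^ 2)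
    (r α : ℝ)
    (hαr : ∀ p : EuclideanSpace ℝ (Fin n), ‖p‖ = r → α < V p)
    (Ω : Set (EuclideanSpace ℝ (Fin n)))
    (hΩ : Ω = {ξ | ‖ξ‖ < r ∧ V ξ ≤ α}) :
    ∀ ξ : ℝ → EuclideanSpace ℝ (Fin n),
      (∀ t : ℝ, 0 ≤ t → HasDerivAt ξ (χ (ξ t)) t) →
      ξ 0 ∈ Ω → ∀ t : ℝ, 0 ≤ t → ξ t ∈ Ω := by
  intro ξ hξ h0 t ht
  subst hΩ
  have hV_deriv : ∀ s, 0 ≤ s → HasDerivAt (V ∘ ξ)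
      (-2 * ‖∑ i, (k i * φ i (ξ s)) • gradient (φ i) (ξ s)‖ ^ 2) s := by
    intro s hs
    have hVξ := (hξ s hs).sum_mul_sq_comp (k := k) fun i => (hφ i).differentiable one_ne_zero _
    rw [hχ, inner_sub_self_eq_neg_of_orthogonal
      (inner_eq_zero_of_forall_inner_eq_det _ (hbot (ξ s)))] at hVξ
    convert hVξ using 1
    · exact funext fun s => hV (ξ s)
    · ring
  refine mem_ball_inter_sublevel_of_antitoneOn hαr
    (fun s hs => (hξ s hs).continuousAt.continuousWithinAt) ?_ h0 ht
  exact antitoneOn_Ici_of_hasDerivAt_nonpos hV_deriv fun s _ =>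
    mul_nonpos_of_nonpos_of_nonneg (by norm_num) (sq_nonneg _)

theorem stmt5 (n : ℕ) (hn : 2 ≤ n)
    (k : Fin (n - 1) → ℝ) (hk : ∀ i, 0 < k i)
    (φ : Fin (n - 1) → EuclideanSpace ℝ (Fin n) → ℝ)
    (hφ : ∀ i, ContDiff ℝ 1 (φ i))
    (bot : EuclideanSpace ℝ (Fin n) → EuclideanSpace ℝ (Fin n))
    (hbot : ∀ ξ u : EuclideanSpace ℝ (Fin n),
      ⟪bot ξ, u⟫ = Matrix.det (Matrix.of (fun (i j : Fin n) =>
        if h : (j : ℕ) < n - 1 then gradient (φ ⟨j, h⟩) ξ i else u i)))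
    (χ : EuclideanSpace ℝ (Fin n) → EuclideanSpace ℝ (Fin n))
    (hχ : ∀ ξ, χ ξ = bot ξ - ∑ i, (k i * φ i ξ) • gradient (φ i) ξ)
    (V : EuclideanSpace ℝ (Fin n) → ℝ)
    (hV : ∀ ξ, V ξ = ∑ i, k i * φ i ξ ^ 2)
    (r α : ℝ) (hr : 0 < r) (hα : 0 < α)
    (hαr : ∀ p : EuclideanSpace ℝ (Fin n), ‖p‖ = r → α < V p)
    (Ω : Set (EuclideanSpace ℝ (Fin n)))
    (hΩ : Ω = {ξ | ‖ξ‖ < r ∧ V ξ ≤ α}) :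
    ∀ ξ : ℝ → EuclideanSpace ℝ (Fin n),
      (∀ t : ℝ, 0 ≤ t → HasDerivAt ξ (χ (ξ t)) t) →
      ξ 0 ∈ Ω → ∀ t : ℝ, 0 ≤ t → ξ t ∈ Ω :=
  stmt5_general n k φ hφ bot hbot χ hχ V hV r α hαr Ω hΩ
end

section
/- Assume each φᵢ is twice continuously differentiable. Let V(ξ) = Σ_{i=1}^{n−1} kᵢ φᵢ(ξ)². Let r > 0 be such that P is nonempty and contained in the open ball {x : ‖x‖ < r}, and let α > 0 satisfy α < V(p) for every p with ‖p‖ = r; set Ω_α = {ξ : ‖ξ‖ < r and V(ξ) ≤ α}. Assume either C = ∅ or inf{‖c − p‖ : c ∈ C, p ∈ P} > 0. Then every differentiable ξ : [0,∞) → ℝⁿ with ξ′(t) = χ(ξ(t)) for all t ≥ 0 and ξ(0) ∈ Ω_α satisfies the dichotomy: either dist(ξ(t), P) → 0 as t → ∞, or C ≠ ∅ and dist(ξ(t), C) → 0 as t → ∞. -/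
/-!
Along a trajectory, `d/dt V(ξ) = 2⟪w, χ⟫ = -2‖w‖²` with `w = ∑ kᵢφᵢ∇φᵢ = ½∇V`, because the wedge
product `⊥_φ` is orthogonal to every `∇φᵢ`. So `V(ξ t)` decreases: the trajectory never reaches
the sphere `‖x‖ = r`, on which `V > α`, and `V(ξ t)` converges to some `L ≥ 0`. Confined to a
compact ball, `ξ` has bounded velocity, so `‖w(ξ t)‖²` is uniformly continuous and Barbalat's lemma
gives `‖w(ξ t)‖ → 0`. Hence `ξ` approaches the points with `w = 0` and `V = L`. If `L = 0` these
lie on `P`. If `L ≠ 0`, some `kᵢφᵢ` is nonzero there, so `w = 0` is a nontrivial linear relation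
among the gradients; the determinant defining `⊥_φ` then vanishes and the point lies in `C`.
-/

open scoped RealInnerProductSpace

open Set Filter Topology Metric

/-- Barbalat's lemma. -/
theorem tendsto_zero_of_tendsto_of_uniformContinuousOn_deriv {g g' : ℝ → ℝ} {a L : ℝ}
    (hg : Tendsto g atTop (𝓝 L)) (hderiv : ∀ t, a ≤ t → HasDerivAt g (g' t) t)
    (huc : UniformContinuousOn g' (Ici a)) : Tendsto g' atTop (𝓝 0) := by
  rw [Metric.tendsto_atTop]
  intro ε hε
  obtain ⟨δ, hδ, hclose⟩ := Metric.uniformContinuousOn_iff.1 huc (ε / 2) (half_pos hε)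
  have hslope : Tendsto (fun t => (g (t + δ / 2) - g t) / (δ / 2)) atTop (𝓝 0) := by
    simpa using ((hg.comp (tendsto_atTop_add_const_right _ (δ / 2) tendsto_id)).sub hg).div_const
      (δ / 2)
  obtain ⟨N, hN⟩ := Metric.tendsto_atTop.1 hslope (ε / 2) (half_pos hε)
  refine ⟨max N a, fun t ht => ?_⟩
  have hta : a ≤ t := le_of_max_le_right ht
  obtain ⟨c, hc, hgc⟩ := exists_hasDerivAt_eq_slope g g' (by linarith : t < t + δ / 2)
    (fun s hs => (hderiv s (hta.trans hs.1)).continuousAt.continuousWithinAt)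
    (fun s hs => hderiv s (hta.trans hs.1.le))
  have hct : dist (g' c) (g' t) < ε / 2 :=
    hclose c (hta.trans hc.1.le) t hta <| by
      rw [Real.dist_eq, abs_lt]; constructor <;> linarith [hc.1, hc.2]
  have hslope_t := hN t (le_of_max_le_left ht)
  rw [add_sub_cancel_left] at hgc
  rw [← hgc] at hslope_t
  calc dist (g' t) 0 ≤ dist (g' t) (g' c) + dist (g' c) 0 := dist_triangle _ _ _
    _ < ε / 2 + ε / 2 := add_lt_add_of_lt_of_lt (dist_comm (g' t) _ ▸ hct) hslope_t
    _ = ε := add_halves ε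

theorem exists_tendsto_of_antitoneOn_Ici {g : ℝ → ℝ} {a : ℝ} (hg : AntitoneOn g (Ici a))
    (hbdd : BddBelow (g '' Ici a)) : ∃ L, Tendsto g atTop (𝓝 L) := by
  have hanti : Antitone fun t => g (max t a) := fun s t hst =>
    hg (le_max_right s a) (le_max_right t a) (max_le_max_right a hst)
  have hrange : BddBelow (range fun t => g (max t a)) :=
    hbdd.mono (range_subset_iff.2 fun t => mem_image_of_mem g (le_max_right t a))
  refine ⟨_, (tendsto_atTop_ciInf hanti hrange).congr' ?_⟩
  filter_upwards [eventually_ge_atTop a] with t ht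
  rw [max_eq_left ht]

theorem antitoneOn_Ici_of_hasDerivAt_nonpos_s6 {g g' : ℝ → ℝ} {a : ℝ}
    (hg : ∀ t, a ≤ t → HasDerivAt g (g' t) t) (hg' : ∀ t, a ≤ t → g' t ≤ 0) :
    AntitoneOn g (Ici a) :=
  antitoneOn_of_hasDerivWithinAt_nonpos (convex_Ici a)
    (fun t ht => (hg t ht).continuousAt.continuousWithinAt)
    (fun t ht => (hg t (interior_subset ht)).hasDerivWithinAt)
    (fun t ht => hg' t (interior_subset ht))

theorem uniformContinuousOn_Ici_of_hasDerivAt {F : Type*} [NormedAddCommGroup F]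
    [NormedSpace ℝ F] {f f' : ℝ → F} {a C : ℝ} (hf : ∀ t, a ≤ t → HasDerivAt f (f' t) t)
    (hC : ∀ t, a ≤ t → ‖f' t‖ ≤ C) : UniformContinuousOn f (Ici a) :=
  ((convex_Ici a).lipschitzOnWith_of_nnnorm_hasDerivWithin_le (C := C.toNNReal)
    (fun t ht => (hf t ht).hasDerivWithinAt) fun t ht => by
      rw [← NNReal.coe_le_coe, coe_nnnorm, Real.coe_toNNReal']
      exact (hC t ht).trans (le_max_left _ _)).uniformContinuousOn

theorem norm_lt_of_antitoneOn_comp {E : Type*} [NormedAddCommGroup E] {ξ : ℝ → E} {V : E → ℝ}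
    {r α : ℝ} (hξ : ContinuousOn ξ (Ici 0)) (hV : AntitoneOn (fun t => V (ξ t)) (Ici 0))
    (hsphere : ∀ p : E, ‖p‖ = r → α < V p) (h0 : ‖ξ 0‖ < r) (hα : V (ξ 0) ≤ α) {t : ℝ}
    (ht : 0 ≤ t) : ‖ξ t‖ < r := by
  by_contra! h
  obtain ⟨s, hs, hsr⟩ := intermediate_value_Icc ht (hξ.norm.mono Icc_subset_Ici_self) ⟨h0.le, h⟩
  exact (hsphere _ hsr).not_ge ((hV self_mem_Ici hs.1 hs.1).trans hα)

theorem IsCompact.exists_eq_zero_of_tendsto {α E : Type*} [TopologicalSpace E] {l : Filter α}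
    [l.NeBot] {K : Set E} (hK : IsCompact K) {f : E → ℝ} (hf : ContinuousOn f K)
    (hf0 : ∀ x ∈ K, 0 ≤ f x)
    {ξ : α → E} (hξK : ∀ᶠ t in l, ξ t ∈ K) (hfξ : Tendsto (fun t => f (ξ t)) l (𝓝 0)) :
    ∃ x ∈ K, f x = 0 := by
  obtain ⟨t, ht⟩ := hξK.exists
  obtain ⟨x, hx, hmin⟩ := hK.exists_isMinOn ⟨_, ht⟩ hf
  refine ⟨x, hx, le_antisymm ?_ (hf0 x hx)⟩
  exact ge_of_tendsto hfξ (hξK.mono fun s hs => hmin hs)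

theorem IsCompact.tendsto_infDist_of_tendsto {α E : Type*} [PseudoMetricSpace E] {l : Filter α}
    {K Z : Set E} (hK : IsCompact K) {f : E → ℝ} (hf : ContinuousOn f K) (hf0 : ∀ x ∈ K, 0 ≤ f x)
    (hZ : ∀ x ∈ K, f x = 0 → x ∈ Z) {ξ : α → E} (hξK : ∀ᶠ t in l, ξ t ∈ K)
    (hfξ : Tendsto (fun t => f (ξ t)) l (𝓝 0)) : Tendsto (fun t => infDist (ξ t) Z) l (𝓝 0) := by
  refine Metric.tendsto_nhds.2 fun ε hε => ?_
  simp only [dist_zero_right, Real.norm_of_nonneg infDist_nonneg]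
  set S := K ∩ {x | ε ≤ infDist x Z}
  rcases S.eq_empty_or_nonempty with hS | hS
  · filter_upwards [hξK] with t ht
    exact not_le.1 fun h => hS.subset ⟨ht, h⟩
  obtain ⟨x, hx, hmin⟩ := (hK.inter_right (isClosed_le continuous_const
    (continuous_infDist_pt Z))).exists_isMinOn hS (hf.mono inter_subset_left)
  have hfx : 0 < f x := (hf0 x hx.1).lt_of_ne fun h => by
    have hεx : ε ≤ infDist x Z := hx.2
    rw [infDist_zero_of_mem (hZ x hx.1 h.symm)] at hεx
    linarith
  filter_upwards [hξK, hfξ.eventually (gt_mem_nhds hfx)] with t ht hft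
  exact not_le.1 fun h => (hmin ⟨ht, h⟩).not_gt hft

theorem exists_tendsto_of_hasDerivAt_comp_eq_neg {E : Type*} [PseudoMetricSpace E] {K : Set E}
    (hK : IsCompact K) {V W : E → ℝ} (hV : ContinuousOn V K) (hW : ContinuousOn W K)
    (hW0 : ∀ x ∈ K, 0 ≤ W x) {ξ : ℝ → E} (hξK : ∀ t, 0 ≤ t → ξ t ∈ K)
    (hξ : UniformContinuousOn ξ (Ici 0))
    (hderiv : ∀ t, 0 ≤ t → HasDerivAt (fun s => V (ξ s)) (-W (ξ t)) t) :
    ∃ L, Tendsto (fun t => V (ξ t)) atTop (𝓝 L) ∧ Tendsto (fun t => W (ξ t)) atTop (𝓝 0) := by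
  have hanti : AntitoneOn (fun t => V (ξ t)) (Ici 0) :=
    antitoneOn_Ici_of_hasDerivAt_nonpos_s6 hderiv fun t ht => neg_nonpos.2 (hW0 _ (hξK t ht))
  obtain ⟨L, hL⟩ := exists_tendsto_of_antitoneOn_Ici hanti
    ((hK.bddBelow_image hV).mono (by rintro _ ⟨t, ht, rfl⟩; exact mem_image_of_mem V (hξK t ht)))
  refine ⟨L, hL, ?_⟩
  have huc : UniformContinuousOn (fun t => -W (ξ t)) (Ici 0) :=
    uniformContinuous_neg.comp_uniformContinuousOn
      ((hK.uniformContinuousOn_of_continuous hW).comp hξ fun t ht => hξK t ht)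
  simpa using (tendsto_zero_of_tendsto_of_uniformContinuousOn_deriv hL hderiv huc).neg

theorem exists_tendsto_infDist_of_hasDerivAt_comp_eq_neg {E : Type*} [PseudoMetricSpace E]
    {K : Set E} (hK : IsCompact K) {V W : E → ℝ} (hV : ContinuousOn V K) (hW : ContinuousOn W K)
    (hW0 : ∀ x ∈ K, 0 ≤ W x) {ξ : ℝ → E} (hξK : ∀ t, 0 ≤ t → ξ t ∈ K)
    (hξ : UniformContinuousOn ξ (Ici 0))
    (hderiv : ∀ t, 0 ≤ t → HasDerivAt (fun s => V (ξ s)) (-W (ξ t)) t) :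
    ∃ L, ∀ Z : Set E, (∀ x ∈ K, W x = 0 → V x = L → x ∈ Z) →
      Z.Nonempty ∧ Tendsto (fun t => infDist (ξ t) Z) atTop (𝓝 0) := by
  obtain ⟨L, hVξ, hWξ⟩ := exists_tendsto_of_hasDerivAt_comp_eq_neg hK hV hW hW0 hξK hξ hderiv
  refine ⟨L, fun Z hZ => ?_⟩
  have hf : ContinuousOn (fun x => W x + |V x - L|) K := hW.add (hV.sub continuousOn_const).abs
  have hf0 : ∀ x ∈ K, 0 ≤ W x + |V x - L| := fun x hx => add_nonneg (hW0 x hx) (abs_nonneg _)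
  have hfZ : ∀ x ∈ K, W x + |V x - L| = 0 → x ∈ Z := fun x hx h => by
    rw [add_eq_zero_iff_of_nonneg (hW0 x hx) (abs_nonneg _), abs_eq_zero, sub_eq_zero] at h
    exact hZ x hx h.1 h.2
  have hξK' : ∀ᶠ t in atTop, ξ t ∈ K := (eventually_ge_atTop 0).mono hξK
  have hfξ : Tendsto (fun t => W (ξ t) + |V (ξ t) - L|) atTop (𝓝 0) := by
    simpa using hWξ.add (hVξ.sub_const L).abs
  obtain ⟨x, hx, hfx⟩ := hK.exists_eq_zero_of_tendsto hf hf0 hξK' hfξ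
  exact ⟨⟨x, hfZ x hx hfx⟩, hK.tendsto_infDist_of_tendsto hf hf0 hfZ hξK' hfξ⟩

theorem eq_zero_of_sum_mul_sq_eq_zero {ι : Type*} [Fintype ι] {k c : ι → ℝ} (hk : ∀ i, 0 < k i)
    (h : ∑ i, k i * c i ^ 2 = 0) (i : ι) : c i = 0 := by
  have hi := (Finset.sum_eq_zero_iff_of_nonneg fun j _ => mul_nonneg (hk j).le (sq_nonneg (c j))).1
    h i (Finset.mem_univ i)
  simpa [(hk i).ne'] using hi

section ConvergingTerm

variable {ι E : Type*} [Fintype ι] [NormedAddCommGroup E] [InnerProductSpace ℝ E]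
  [CompleteSpace E]

noncomputable def convergingTerm (k : ι → ℝ) (φ : ι → E → ℝ) (x : E) : E :=
  ∑ i, (k i * φ i x) • gradient (φ i) x

theorem ContDiff.continuous_gradient {f : E → ℝ} {m : WithTop ℕ∞} (hf : ContDiff ℝ m f)
    (hm : m ≠ 0) : Continuous (gradient f) :=
  (InnerProductSpace.toDual ℝ E).symm.continuous.comp (hf.continuous_fderiv hm)

theorem continuous_convergingTerm {k : ι → ℝ} {φ : ι → E → ℝ} {m : WithTop ℕ∞}
    (hφ : ∀ i, ContDiff ℝ m (φ i)) (hm : m ≠ 0) : Continuous (convergingTerm k φ) :=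
  continuous_finsetSum _ fun i _ =>
    (continuous_const.mul ((hφ i).continuous)).smul ((hφ i).continuous_gradient hm)

theorem hasDerivAt_sum_mul_sq_comp (k : ι → ℝ) {φ : ι → E → ℝ} {γ : ℝ → E} {γ' : E} {t : ℝ}
    (hφ : ∀ i, DifferentiableAt ℝ (φ i) (γ t)) (hγ : HasDerivAt γ γ' t) :
    HasDerivAt (fun s => ∑ i, k i * φ i (γ s) ^ 2) (2 * ⟪convergingTerm k φ (γ t), γ'⟫) t := by
  have hcomp : ∀ i, HasDerivAt (fun s => φ i (γ s)) ⟪gradient (φ i) (γ t), γ'⟫ t := fun i =>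
    ((hφ i).hasGradientAt.hasFDerivAt.comp_hasDerivAt t hγ).congr_deriv
      (InnerProductSpace.toDual_apply_apply ..).symm
  have hterm : ∀ i, HasDerivAt (fun s => k i * φ i (γ s) ^ 2)
      (2 * ((k i * φ i (γ t)) * ⟪gradient (φ i) (γ t), γ'⟫)) t := fun i =>
    (((hcomp i).fun_pow 2).const_mul (k i)).congr_deriv (by ring)
  refine (HasDerivAt.fun_sum (u := Finset.univ) fun i _ => hterm i).congr_deriv ?_
  simp only [convergingTerm, sum_inner, Finset.mul_sum, real_inner_smul_left]

end ConvergingTerm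

def IsWedgeProduct {n : ℕ} (v : Fin (n - 1) → EuclideanSpace ℝ (Fin n))
    (b : EuclideanSpace ℝ (Fin n)) : Prop :=
  ∀ u : EuclideanSpace ℝ (Fin n), ⟪b, u⟫ = Matrix.det (Matrix.of fun i j : Fin n =>
    if h : (j : ℕ) < n - 1 then v ⟨j, h⟩ i else u i)

namespace IsWedgeProduct

variable {n : ℕ} {v : Fin (n - 1) → EuclideanSpace ℝ (Fin n)} {b : EuclideanSpace ℝ (Fin n)}

theorem inner_eq_zero (hb : IsWedgeProduct v b) (i : Fin (n - 1)) : ⟪b, v i⟫ = 0 := by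
  have hi := i.2
  rw [hb]
  refine Matrix.det_zero_of_column_eq (i := ⟨i, by omega⟩) (j := ⟨n - 1, by omega⟩)
    (by simp [Fin.ext_iff]; omega) fun row => ?_
  simp [i.2]

theorem inner_sum_smul_eq_zero (hb : IsWedgeProduct v b) (c : Fin (n - 1) → ℝ) :
    ⟪∑ i, c i • v i, b⟫ = 0 := by
  rw [sum_inner]
  exact Finset.sum_eq_zero fun i _ => by
    rw [real_inner_smul_left, real_inner_comm, hb.inner_eq_zero, mul_zero]

theorem eq_zero_of_not_linearIndependent (hb : IsWedgeProduct v b)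
    (hv : ¬ LinearIndependent ℝ v) : b = 0 := by
  refine inner_self_eq_zero.mp ((hb b).trans (Matrix.det_eq_zero_of_not_linearIndependent_cols
    fun hcols => hv ?_))
  refine LinearIndependent.of_comp (WithLp.linearEquiv 2 ℝ (Fin n → ℝ)).toLinearMap ?_
  convert hcols.comp _ (Fin.castLE_injective (Nat.sub_le n 1)) using 1
  · ext i row
    simp [i.2]
  all_goals rfl

theorem continuous {X : Type*} [TopologicalSpace X]
    {v : X → Fin (n - 1) → EuclideanSpace ℝ (Fin n)} {b : X → EuclideanSpace ℝ (Fin n)}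
    (hv : ∀ i, Continuous fun x => v x i)
    (hb : ∀ x, IsWedgeProduct (v x) (b x)) : Continuous b := by
  have hcoord : ∀ x j, b x j = Matrix.det (Matrix.of fun i j' : Fin n =>
      if h : (j' : ℕ) < n - 1 then v x ⟨j', h⟩ i else EuclideanSpace.single j (1 : ℝ) i) := by
    intro x j
    rw [← hb x, EuclideanSpace.inner_single_right]
    simp
  have hb_eq : b = fun x => WithLp.toLp 2 fun j => b x j := rfl
  rw [hb_eq]
  refine (PiLp.continuous_toLp 2 _).comp (continuous_pi fun j => ?_)
  simp_rw [hcoord]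
  refine Continuous.matrix_det (continuous_matrix fun i j' => ?_)
  simp only [Matrix.of_apply]
  split_ifs
  · exact (PiLp.continuous_apply 2 _ i).comp (hv _)
  · exact continuous_const

end IsWedgeProduct

section GuidingField

variable {n : ℕ} {k : Fin (n - 1) → ℝ} {φ : Fin (n - 1) → EuclideanSpace ℝ (Fin n) → ℝ}

theorem IsWedgeProduct.hasDerivAt_sum_mul_sq_comp {ξ : ℝ → EuclideanSpace ℝ (Fin n)} {t : ℝ}
    {b : EuclideanSpace ℝ (Fin n)} (hφ : ∀ i, DifferentiableAt ℝ (φ i) (ξ t))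
    (hb : IsWedgeProduct (fun i => gradient (φ i) (ξ t)) b)
    (hξ : HasDerivAt ξ (b - convergingTerm k φ (ξ t)) t) :
    HasDerivAt (fun s => ∑ i, k i * φ i (ξ s) ^ 2) (-(2 * ‖convergingTerm k φ (ξ t)‖ ^ 2)) t := by
  refine (_root_.hasDerivAt_sum_mul_sq_comp k hφ hξ).congr_deriv ?_
  have hwb : ⟪convergingTerm k φ (ξ t), b⟫ = 0 := hb.inner_sum_smul_eq_zero _
  rw [inner_sub_right, hwb, real_inner_self_eq_norm_sq]
  ring

theorem IsWedgeProduct.eq_zero_of_convergingTerm_eq_zero {x b : EuclideanSpace ℝ (Fin n)}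
    (hb : IsWedgeProduct (fun i => gradient (φ i) x) b) (hw : convergingTerm k φ x = 0)
    (hV : ∑ i, k i * φ i x ^ 2 ≠ 0) : b = 0 := by
  refine hb.eq_zero_of_not_linearIndependent
    (Fintype.not_linearIndependent_iff.2 ⟨fun i => k i * φ i x, hw, ?_⟩)
  by_contra! h
  exact hV (Finset.sum_eq_zero fun i _ => by rw [sq, ← mul_assoc, h i, zero_mul])

end GuidingField

theorem stmt6_general (n : ℕ)
    (k : Fin (n - 1) → ℝ) (hk : ∀ i, 0 < k i)
    (φ : Fin (n - 1) → EuclideanSpace ℝ (Fin n) → ℝ)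
    (hφ : ∀ i, ContDiff ℝ 2 (φ i))
    (bot : EuclideanSpace ℝ (Fin n) → EuclideanSpace ℝ (Fin n))
    (hbot : ∀ ξ u : EuclideanSpace ℝ (Fin n),
      ⟪bot ξ, u⟫ = Matrix.det (Matrix.of (fun (i j : Fin n) =>
        if h : (j : ℕ) < n - 1 then gradient (φ ⟨j, h⟩) ξ i else u i)))
    (χ : EuclideanSpace ℝ (Fin n) → EuclideanSpace ℝ (Fin n))
    (hχ : ∀ ξ, χ ξ = bot ξ - ∑ i, (k i * φ i ξ) • gradient (φ i) ξ)
    (P C : Set (EuclideanSpace ℝ (Fin n)))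
    (hP : P = {ξ | ∀ i, φ i ξ = 0})
    (hC : C = {ξ | χ ξ = 0})
    (V : EuclideanSpace ℝ (Fin n) → ℝ)
    (hV : ∀ ξ, V ξ = ∑ i, k i * φ i ξ ^ 2)
    (r : ℝ)
    (α : ℝ)
    (hαr : ∀ p : EuclideanSpace ℝ (Fin n), ‖p‖ = r → α < V p)
    (ξ : ℝ → EuclideanSpace ℝ (Fin n))
    (hξ : ∀ t : ℝ, 0 ≤ t → HasDerivAt ξ (χ (ξ t)) t)
    (hξ0 : ‖ξ 0‖ < r ∧ V (ξ 0) ≤ α) :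
    Filter.Tendsto (fun t => Metric.infDist (ξ t) P) Filter.atTop (nhds 0) ∨
      (C.Nonempty ∧ Filter.Tendsto (fun t => Metric.infDist (ξ t) C) Filter.atTop (nhds 0)) := by
  obtain rfl : V = fun x => ∑ i, k i * φ i x ^ 2 := funext hV
  obtain rfl : χ = fun x => bot x - convergingTerm k φ x := funext hχ
  subst hP hC
  have hwedge : ∀ x, IsWedgeProduct (fun i => gradient (φ i) x) (bot x) := hbot
  have hφc : ∀ i, Continuous (φ i) := fun i => (hφ i).continuous
  have hwc : Continuous (convergingTerm k φ) := continuous_convergingTerm hφ two_ne_zero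
  have hχc : Continuous fun x => bot x - convergingTerm k φ x :=
    (IsWedgeProduct.continuous (fun i => (hφ i).continuous_gradient two_ne_zero) hwedge).sub hwc
  have hderiv : ∀ t, 0 ≤ t → HasDerivAt (fun s => ∑ i, k i * φ i (ξ s) ^ 2)
      (-(2 * ‖convergingTerm k φ (ξ t)‖ ^ 2)) t := fun t ht =>
    (hwedge _).hasDerivAt_sum_mul_sq_comp (fun i => (hφ i).differentiable two_ne_zero _) (hξ t ht)
  have hball : ∀ t, 0 ≤ t → ξ t ∈ closedBall 0 r := fun t ht =>
    mem_closedBall_zero_iff.2 (norm_lt_of_antitoneOn_comp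
      (fun s hs => (hξ s hs).continuousAt.continuousWithinAt)
      (antitoneOn_Ici_of_hasDerivAt_nonpos_s6 hderiv fun s _ => neg_nonpos.2 (by positivity))
      hαr hξ0.1 hξ0.2 ht).le
  obtain ⟨M, hM⟩ := (isCompact_closedBall 0 r).exists_bound_of_continuousOn hχc.continuousOn
  obtain ⟨L, hL⟩ := exists_tendsto_infDist_of_hasDerivAt_comp_eq_neg (isCompact_closedBall 0 r)
    (V := fun x => ∑ i, k i * φ i x ^ 2) (W := fun x => 2 * ‖convergingTerm k φ x‖ ^ 2)
    (by fun_prop) (by fun_prop) (fun x _ => by positivity) hball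
    (uniformContinuousOn_Ici_of_hasDerivAt hξ fun t ht => hM _ (hball t ht)) hderiv
  by_cases hL0 : L = 0
  · subst hL0
    exact Or.inl (hL _ fun x _ _ hVx => eq_zero_of_sum_mul_sq_eq_zero hk hVx).2
  · refine Or.inr (hL _ fun x _ hWx hVx => ?_)
    have hw : convergingTerm k φ x = 0 := by simpa using hWx
    change bot x - convergingTerm k φ x = 0
    rw [hw, (hwedge x).eq_zero_of_convergingTerm_eq_zero hw (hVx ▸ hL0), sub_zero]

theorem stmt6 (n : ℕ) (hn : 2 ≤ n)
    (k : Fin (n - 1) → ℝ) (hk : ∀ i, 0 < k i)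
    (φ : Fin (n - 1) → EuclideanSpace ℝ (Fin n) → ℝ)
    (hφ : ∀ i, ContDiff ℝ 2 (φ i))
    (bot : EuclideanSpace ℝ (Fin n) → EuclideanSpace ℝ (Fin n))
    (hbot : ∀ ξ u : EuclideanSpace ℝ (Fin n),
      ⟪bot ξ, u⟫ = Matrix.det (Matrix.of (fun (i j : Fin n) =>
        if h : (j : ℕ) < n - 1 then gradient (φ ⟨j, h⟩) ξ i else u i)))
    (χ : EuclideanSpace ℝ (Fin n) → EuclideanSpace ℝ (Fin n))
    (hχ : ∀ ξ, χ ξ = bot ξ - ∑ i, (k i * φ i ξ) • gradient (φ i) ξ)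
    (P C : Set (EuclideanSpace ℝ (Fin n)))
    (hP : P = {ξ | ∀ i, φ i ξ = 0})
    (hC : C = {ξ | χ ξ = 0})
    (V : EuclideanSpace ℝ (Fin n) → ℝ)
    (hV : ∀ ξ, V ξ = ∑ i, k i * φ i ξ ^ 2)
    (r : ℝ) (hr : 0 < r) (hPne : P.Nonempty)
    (hPr : P ⊆ Metric.ball (0 : EuclideanSpace ℝ (Fin n)) r)
    (α : ℝ) (hα : 0 < α)
    (hαr : ∀ p : EuclideanSpace ℝ (Fin n), ‖p‖ = r → α < V p)
    (hCP : C = ∅ ∨ ∃ d > (0 : ℝ), ∀ c ∈ C, ∀ p ∈ P, d ≤ ‖c - p‖)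
    (ξ : ℝ → EuclideanSpace ℝ (Fin n))
    (hξ : ∀ t : ℝ, 0 ≤ t → HasDerivAt ξ (χ (ξ t)) t)
    (hξ0 : ‖ξ 0‖ < r ∧ V (ξ 0) ≤ α) :
    Filter.Tendsto (fun t => Metric.infDist (ξ t) P) Filter.atTop (nhds 0) ∨
      (C.Nonempty ∧ Filter.Tendsto (fun t => Metric.infDist (ξ t) C) Filter.atTop (nhds 0)) :=
  stmt6_general n k hk φ hφ bot hbot χ hχ P C hP hC V hV r α hαr ξ hξ hξ0
end
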